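/- Toy system invalidity: Let p, q, r be distinct atomic formulas, let p̄ denote the atomic axiom rule with conclusion p and no premises, and let p/q, p/r denote the first-level atomic rules from premise p to conclusions q and r respectively. Relative to the proof-theoretic system 𝔖₂ = {∅, {p̄}, {p̄, p/q}, {p̄, p/r}} (with acceptable extensions of S being the supersets of S in 𝔖₂), the open one-step argument from the assumption p to the conclusion q∨r is NOT ∅-valid: the extension {p̄} of ∅ has a closed {p̄}-valid argument for p but no closed {p̄}-valid argument for q∨r. -/

import Mathlib

/-!
Common framework for proof-theoretic validity (Prawitz / Piecha–Schroeder-Heister style).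

* Propositional formulas over countably many atoms (`ℕ`), with `⊥`, `∧`, `∨`, `→`;
  `¬A` abbreviates `A → ⊥`.
* Higher-level atomic rules: a rule has a finite list of premises, each premise being
  a pair of (a finite list of lower-level rules that may be discharged, an atomic
  conclusion), together with an atomic conclusion.  An atomic axiom `p̄` is
  `HLRule.mk [] p`; an assumption of an atom is identified with its axiom rule.
* `AtDeriv S p`: the atom `p` is derivable using only rules of `S`
  (discharged rules become available).
* `Deriv S Γ φ`: natural deduction NJ augmented with the atomic rules in `S`,
  from hypotheses `Γ`.  `⊢_IPC` is `Deriv ∅ ∅`.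
* `Valid 𝔖 S φ` formalizes "there is a closed `S`-valid argument for `φ`" relative to
  the proof-theoretic system `𝔖` (acceptable extensions of `S` are the supersets of `S`
  belonging to `𝔖`).  Unfolding the inductive definition of `S`-validity of arguments
  (atomic case, closed introduction case, closed non-introduction case, open case)
  clause-by-clause on the conclusion yields exactly the following recursion on formulas:
  a closed valid argument for `A ∧ B` reduces (via the non-introduction case) to one
  ending in `∧`-introduction, i.e. closed valid arguments for `A` and `B`; similarly for
  `∨`; a closed valid argument for `A → B` reduces to one ending in `→`-introduction,
  whose immediate subargument is an open argument of `B` from the assumption `A`, which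
  by the open case is valid iff every acceptable extension `S' ∈ 𝔖` of `S` having a
  closed `S'`-valid argument for `A` has one for `B`; a closed valid argument for an
  atom `p` exists iff `p` is `S`-derivable; and for `⊥` (which has no introduction rule,
  and is governed by the rules `⊥/p` for every atom `p`) iff every atom is `S`-derivable.
-/

/-- Propositional formulas over atoms `ℕ`. -/
inductive PropForm : Type
  | atom : ℕ → PropForm
  | falsum : PropForm
  | conj : PropForm → PropForm → PropForm
  | disj : PropForm → PropForm → PropForm
  | impl : PropForm → PropForm → PropForm
  deriving DecidableEq

/-- `¬A` abbreviates `A → ⊥`. -/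
def PropForm.neg (A : PropForm) : PropForm := .impl A .falsum

/-- Higher-level atomic rules. -/
inductive HLRule : Type
  | mk : List (List HLRule × ℕ) → ℕ → HLRule

/-- `AtDeriv S p`: the atom `p` is derivable using only the atomic rules in `S`;
applying a rule requires deriving each premise with its discharged rules made available. -/
inductive AtDeriv : Set HLRule → ℕ → Prop
  | app (S : Set HLRule) (prems : List (List HLRule × ℕ)) (concl : ℕ)
      (hmem : HLRule.mk prems concl ∈ S)
      (hprem : ∀ pr ∈ prems, AtDeriv (S ∪ {R | R ∈ pr.1}) pr.2) :
      AtDeriv S concl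

/-- Natural deduction NJ for intuitionistic propositional logic, augmented with the
atomic rules in `S`, with hypotheses `Γ`.  `Deriv ∅ Γ φ` is `Γ ⊢_IPC φ`. -/
inductive Deriv : Set HLRule → Set PropForm → PropForm → Prop
  | hyp {S : Set HLRule} {Γ : Set PropForm} {A : PropForm} :
      A ∈ Γ → Deriv S Γ A
  | falsumE {S : Set HLRule} {Γ : Set PropForm} {A : PropForm} :
      Deriv S Γ .falsum → Deriv S Γ A
  | andI {S : Set HLRule} {Γ : Set PropForm} {A B : PropForm} :
      Deriv S Γ A → Deriv S Γ B → Deriv S Γ (.conj A B)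
  | andE1 {S : Set HLRule} {Γ : Set PropForm} {A B : PropForm} :
      Deriv S Γ (.conj A B) → Deriv S Γ A
  | andE2 {S : Set HLRule} {Γ : Set PropForm} {A B : PropForm} :
      Deriv S Γ (.conj A B) → Deriv S Γ B
  | orI1 {S : Set HLRule} {Γ : Set PropForm} {A B : PropForm} :
      Deriv S Γ A → Deriv S Γ (.disj A B)
  | orI2 {S : Set HLRule} {Γ : Set PropForm} {A B : PropForm} :
      Deriv S Γ B → Deriv S Γ (.disj A B)
  | orE {S : Set HLRule} {Γ : Set PropForm} {A B C : PropForm} :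
      Deriv S Γ (.disj A B) → Deriv S (insert A Γ) C → Deriv S (insert B Γ) C →
      Deriv S Γ C
  | implI {S : Set HLRule} {Γ : Set PropForm} {A B : PropForm} :
      Deriv S (insert A Γ) B → Deriv S Γ (.impl A B)
  | implE {S : Set HLRule} {Γ : Set PropForm} {A B : PropForm} :
      Deriv S Γ (.impl A B) → Deriv S Γ A → Deriv S Γ B
  | rule {S : Set HLRule} {Γ : Set PropForm}
      (prems : List (List HLRule × ℕ)) (concl : ℕ) :
      HLRule.mk prems concl ∈ S →
      (∀ pr ∈ prems, Deriv (S ∪ {R | R ∈ pr.1}) Γ (.atom pr.2)) →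
      Deriv S Γ (.atom concl)

/-- `⊢_IPC φ` : derivability of `φ` in intuitionistic propositional natural deduction. -/
def IPC (φ : PropForm) : Prop := Deriv ∅ ∅ φ

/-- Auxiliary form of validity, by recursion on the formula. -/
def ValidAux (𝔖 : Set (Set HLRule)) : PropForm → Set HLRule → Prop
  | .atom p, S => AtDeriv S p
  | .falsum, S => ∀ a : ℕ, AtDeriv S a
  | .conj A B, S => ValidAux 𝔖 A S ∧ ValidAux 𝔖 B S
  | .disj A B, S => ValidAux 𝔖 A S ∨ ValidAux 𝔖 B S
  | .impl A B, S => ∀ S' ∈ 𝔖, S ⊆ S' → ValidAux 𝔖 A S' → ValidAux 𝔖 B S'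

/-- `Valid 𝔖 S φ`: relative to the proof-theoretic system `𝔖` (in which the acceptable
extensions of `S` are exactly the supersets of `S` belonging to `𝔖`), there is a closed
`S`-valid argument for `φ`. -/
def Valid (𝔖 : Set (Set HLRule)) (S : Set HLRule) (φ : PropForm) : Prop :=
  ValidAux 𝔖 φ S

/-- `𝔖 ⊨ φ`: for every `S ∈ 𝔖` there is a closed `S`-valid argument for `φ`
(acceptable extensions taken in `𝔖`). -/
def Models (𝔖 : Set (Set HLRule)) (φ : PropForm) : Prop :=
  ∀ S ∈ 𝔖, Valid 𝔖 S φ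

/-- The complete proof-theoretic system: all sets of atomic rules of all levels. -/
def completeSystem : Set (Set HLRule) := Set.univ

/-- `S`-validity of the open one-premise/one-assumption argument from `A` to `B`
(relative to `𝔖`): by the open case, for every acceptable extension `S' ∈ 𝔖` of `S`,
substituting any closed `S'`-valid argument for the assumption `A` yields an
`S'`-valid closed argument, which (the final step not being an introduction rule)
amounts to the existence of a closed `S'`-valid argument for `B`. -/
def OpenArgValid1 (𝔖 : Set (Set HLRule)) (S : Set HLRule) (A B : PropForm) : Prop :=
  ∀ S' ∈ 𝔖, S ⊆ S' → Valid 𝔖 S' A → Valid 𝔖 S' B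

/-- The atomic axiom rule `p̄` with no premises and conclusion `p`. -/
def axiomRule (p : ℕ) : HLRule := .mk [] p

/-- The first-level atomic rule from premise `p` to conclusion `q` (discharging
nothing). -/
def stepRule (p q : ℕ) : HLRule := .mk [([], p)] q

theorem atDeriv_singleton_axiomRule_iff {p x : ℕ} :
    AtDeriv {axiomRule p} x ↔ x = p := by
  constructor
  · rintro ⟨S, prems, concl, hmem, -⟩
    simp only [Set.mem_singleton_iff, axiomRule, HLRule.mk.injEq] at hmem
    exact hmem.2
  · rintro rfl
    exact AtDeriv.app _ [] x rfl (by simp)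

theorem not_openArgValid1_of_extension {𝔖 : Set (Set HLRule)} {S S' : Set HLRule}
    {A B : PropForm} (hS' : S' ∈ 𝔖) (hSS' : S ⊆ S') (hA : Valid 𝔖 S' A)
    (hB : ¬ Valid 𝔖 S' B) : ¬ OpenArgValid1 𝔖 S A B :=
  fun h ↦ hB (h S' hS' hSS' hA)

theorem toy_system_open_argument_invalid_general (p q r : ℕ)
    (hpq : p ≠ q) (hpr : p ≠ r) :
    ¬ OpenArgValid1
        ({∅, {axiomRule p}, {axiomRule p, stepRule p q},
          {axiomRule p, stepRule p r}} : Set (Set HLRule))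
        (∅ : Set HLRule) (.atom p) (.disj (.atom q) (.atom r)) ∧
      Valid
        ({∅, {axiomRule p}, {axiomRule p, stepRule p q},
          {axiomRule p, stepRule p r}} : Set (Set HLRule))
        ({axiomRule p} : Set HLRule) (.atom p) ∧
      ¬ Valid
          ({∅, {axiomRule p}, {axiomRule p, stepRule p q},
            {axiomRule p, stepRule p r}} : Set (Set HLRule))
          ({axiomRule p} : Set HLRule) (.disj (.atom q) (.atom r)) := by
  have hp : AtDeriv {axiomRule p} p := atDeriv_singleton_axiomRule_iff.mpr rfl
  have hqr : ¬ (AtDeriv {axiomRule p} q ∨ AtDeriv {axiomRule p} r) := by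
    simp only [atDeriv_singleton_axiomRule_iff]
    exact fun h ↦ h.elim (hpq ·.symm) (hpr ·.symm)
  exact ⟨not_openArgValid1_of_extension (by simp) (Set.empty_subset _) hp hqr, hp, hqr⟩

/-- **Toy system invalidity.**  Let `p, q, r` be distinct atoms.  Relative to the
proof-theoretic system `𝔖₂ = {∅, {p̄}, {p̄, p/q}, {p̄, p/r}}` (acceptable extensions
being supersets within `𝔖₂`), the open one-step argument from the assumption `p` to
the conclusion `q ∨ r` is NOT `∅`-valid: the extension `{p̄}` of `∅` has a closed
`{p̄}`-valid argument for `p` but no closed `{p̄}`-valid argument for `q ∨ r`. -/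
theorem toy_system_open_argument_invalid (p q r : ℕ)
    (hpq : p ≠ q) (hpr : p ≠ r) (hqr : q ≠ r) :
    ¬ OpenArgValid1
        ({∅, {axiomRule p}, {axiomRule p, stepRule p q},
          {axiomRule p, stepRule p r}} : Set (Set HLRule))
        (∅ : Set HLRule) (.atom p) (.disj (.atom q) (.atom r)) ∧
      Valid
        ({∅, {axiomRule p}, {axiomRule p, stepRule p q},
          {axiomRule p, stepRule p r}} : Set (Set HLRule))
        ({axiomRule p} : Set HLRule) (.atom p) ∧
      ¬ Valid
          ({∅, {axiomRule p}, {axiomRule p, stepRule p q},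
            {axiomRule p, stepRule p r}} : Set (Set HLRule))
          ({axiomRule p} : Set HLRule) (.disj (.atom q) (.atom r)) :=
  toy_system_open_argument_invalid_general p q r hpq hpr
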